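/- Fix p ∈ (1,5) and define g(x) = 6x/(6 − (5−p)x), where division in ℝ is interpreted as total (so g is defined for all real x). Let (l_j)_{j≥1} be the sequence determined by a starting value l₁ with l₁ ≥ 1 and l₁·p ≤ 6, and the recursion l_{j+1} = g(l_j). Then there exists an index j ≥ 1 with l_j ≥ 6/(6−p); that is, the bootstrapping procedure terminates after finitely many steps. -/
import Mathlib


/-- The bootstrapping procedure terminates after finitely many steps: the sequence
`l_{j+1} = 6 l_j / (6 − (5−p) l_j)`, started at `l₁ ≥ 1` with `l₁ p ≤ 6`, reaches
a value `l_j ≥ 6/(6−p)` for some index `j ≥ 1`. -/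
theorem bootstrap_terminates
    (p : ℝ) (hp1 : 1 < p) (hp5 : p < 5)
    (l : ℕ → ℝ) (hl1 : 1 ≤ l 1) (hl1p : l 1 * p ≤ 6)
    (hrec : ∀ j : ℕ, 1 ≤ j → l (j + 1) = 6 * l j / (6 - (5 - p) * l j)) :
    ∃ j : ℕ, 1 ≤ j ∧ 6 / (6 - p) ≤ l j := by
  by_contra hcon
  push_neg at hcon
  set T : ℝ := 6 / (6 - p) with hT
  have h6p : (0:ℝ) < 6 - p := by linarith
  set c : ℝ := (5 - p) / 6 with hc
  have hcpos : 0 < c := div_pos (by linarith) (by norm_num)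
  -- key induction
  have key : ∀ n : ℕ, 1 ≤ l (n + 1) ∧ l 1 + n * c ≤ l (n + 1) := by
    intro n
    induction n with
    | zero => simpa using hl1
    | succ n ih =>
      obtain ⟨h1, h2⟩ := ih
      have hlt : l (n + 1) < T := hcon (n + 1) (Nat.le_add_left 1 n)
      set x : ℝ := l (n + 1) with hx
      have hDpos : 6 / (6 - p) ≤ 6 - (5 - p) * x := by
        have h1' : (5 - p) * x ≤ (5 - p) * T := by nlinarith
        have : (5 - p) * T = 6 * (5 - p) / (6 - p) := by
          rw [hT]; ring
        have hTeq : 6 - (5 - p) * T = 6 / (6 - p) := by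
          rw [this]; field_simp; ring
        linarith
      have hDpos' : 0 < 6 - (5 - p) * x := by
        have : (0:ℝ) < 6 / (6 - p) := by positivity
        linarith
      have hDle : 6 - (5 - p) * x ≤ 6 := by nlinarith
      have hrec' : l (n + 2) = 6 * x / (6 - (5 - p) * x) :=
        hrec (n + 1) (Nat.le_add_left 1 n)
      have hstep : x + c ≤ l (n + 2) := by
        rw [hrec', le_div_iff₀ hDpos']
        nlinarith [sq_nonneg x, mul_pos hcpos hDpos']
      constructor
      · linarith
      · push_cast
        linarith
  -- derive contradiction from unboundedness
  obtain ⟨n, hn⟩ := exists_nat_ge ((T - l 1) / c)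
  have := (key n).2
  have hlt : l (n + 1) < T := hcon (n + 1) (Nat.le_add_left 1 n)
  have : T - l 1 ≤ n * c := by
    rw [div_le_iff₀ hcpos] at hn; linarith
  linarith
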